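/- (Corollary to Theorem 6) Consider the nearest-neighbor case J(1) = 1 and J(r) = 0 for r ≥ 2 (Δ(·) and h arbitrary). Let m be an integer with 0 ≤ m ≤ 2S, set M = (S − m)L, and let ψ be a unit vector in V(M,q) attaining E(M;q). Then for every site j, ⟨ψ, S^x_j S^x_{j+1} ψ⟩ ≤ 0, where S^x_j = (S^+_j + S^-_j)/2. -/

import Mathlib

open scoped BigOperators Matrix
open Fin.NatCast
noncomputable section

namespace LSM

/-- Number of basis states per site: `2S+1`. -/
abbrev N (twoS : ℕ) : ℕ := twoS + 1

/-- The spin value `S` as a real number (so `2S = twoS`). -/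
def spin (twoS : ℕ) : ℝ := (twoS : ℝ) / 2

/-- The `S^z`-value of the `k`-th basis vector: `m = S - k`, `k = 0, …, 2S`. -/
def mval (twoS : ℕ) (k : Fin (N twoS)) : ℝ := spin twoS - (k : ℕ)

/-- Single-site `S^z` matrix. -/
def SzMat (twoS : ℕ) : Matrix (Fin (N twoS)) (Fin (N twoS)) ℂ :=
  Matrix.diagonal fun k => (mval twoS k : ℂ)

/-- Single-site raising operator `S^+`. -/
def SpMat (twoS : ℕ) : Matrix (Fin (N twoS)) (Fin (N twoS)) ℂ :=
  Matrix.of fun a b =>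
    if (a : ℕ) + 1 = (b : ℕ) then
      ((Real.sqrt (spin twoS * (spin twoS + 1) - mval twoS b * (mval twoS b + 1)) : ℝ) : ℂ)
    else 0

/-- Single-site lowering operator `S^-`. -/
def SmMat (twoS : ℕ) : Matrix (Fin (N twoS)) (Fin (N twoS)) ℂ :=
  Matrix.of fun a b =>
    if (a : ℕ) = (b : ℕ) + 1 then
      ((Real.sqrt (spin twoS * (spin twoS + 1) - mval twoS b * (mval twoS b - 1)) : ℝ) : ℂ)
    else 0

/-- Single-site `S^y = (S^+ - S^-)/(2i)`. -/
def SyMat (twoS : ℕ) : Matrix (Fin (N twoS)) (Fin (N twoS)) ℂ :=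
  ((2 : ℂ) * Complex.I)⁻¹ • (SpMat twoS - SmMat twoS)

/-- Single-site `S^x = (S^+ + S^-)/2`. -/
def SxMat (twoS : ℕ) : Matrix (Fin (N twoS)) (Fin (N twoS)) ℂ :=
  ((2 : ℂ))⁻¹ • (SpMat twoS + SmMat twoS)

/-- Configurations (product basis labels) of the chain of length `L`. -/
abbrev Conf (twoS L : ℕ) := Fin L → Fin (N twoS)

/-- Operators on the chain Hilbert space `⊗_{j=1}^L ℂ^{2S+1}`, as matrices in the
product basis. -/
abbrev Op (twoS L : ℕ) := Matrix (Conf twoS L) (Conf twoS L) ℂ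

/-- The single-site matrix `A` acting on the `j`-th tensor factor (identity elsewhere). -/
def site (twoS L : ℕ) (j : Fin L) (A : Matrix (Fin (N twoS)) (Fin (N twoS)) ℂ) :
    Op twoS L :=
  Matrix.of fun x y => if ∀ i, i ≠ j → x i = y i then A (x j) (y j) else 0

/-- Total `S^z`. -/
def SzT (twoS L : ℕ) : Op twoS L := ∑ j : Fin L, site twoS L j (SzMat twoS)

/-- Total `S^y`. -/
def SyT (twoS L : ℕ) : Op twoS L := ∑ j : Fin L, site twoS L j (SyMat twoS)

/-- Translation by one site: the permutation matrix with
`Utrl† A_j Utrl = A_{j+1}` for every single-site operator `A`. -/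
def Utrl (twoS L : ℕ) [NeZero L] : Op twoS L :=
  Matrix.of fun x y => if x = (fun i => y (i + 1)) then 1 else 0

/-- Site parity (space inversion `j ↦ L - j = -j (mod L)`): the permutation matrix with
`P† A_j P = A_{L-j}` for every single-site operator `A`. -/
def Pop (twoS L : ℕ) [NeZero L] : Op twoS L :=
  Matrix.of fun x y => if x = (fun i => y (-i)) then 1 else 0

/-- Link parity `P_link = P U_trl`. -/
def Plink (twoS L : ℕ) [NeZero L] : Op twoS L := Pop twoS L * Utrl twoS L

/-- The generalized XXZ Hamiltonian with periodic boundary conditions. -/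
def Ham (twoS L : ℕ) [NeZero L] (J Δ : ℕ → ℝ) (h : ℝ) : Op twoS L :=
  (∑ j : Fin L, ∑ r ∈ Finset.Icc 1 (L / 2),
      ((((J r : ℝ) : ℂ) / 2) •
        (site twoS L j (SpMat twoS) * site twoS L (j + (r : Fin L)) (SmMat twoS) +
          site twoS L j (SmMat twoS) * site twoS L (j + (r : Fin L)) (SpMat twoS)) +
      ((Δ r : ℝ) : ℂ) •
        (site twoS L j (SzMat twoS) * site twoS L (j + (r : Fin L)) (SzMat twoS)))) +
    (h : ℂ) • SzT twoS L

/-- The generator `Σ_{j=1}^{L} j (S^z_j - S)` of the (site-centered) twist. -/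
def twistGen (twoS L : ℕ) [NeZero L] : Op twoS L :=
  ∑ j ∈ Finset.Icc 1 L,
    (j : ℂ) • site twoS L ((j : ℕ) : Fin L) (SzMat twoS - ((spin twoS : ℝ) : ℂ) • 1)

/-- The twist operator `U^tw_{ε·2π} = exp(-ε (2πi/L) Σ_j j (S^z_j - S))`, `ε = ±1`. -/
def Utw (twoS L : ℕ) [NeZero L] (ε : ℝ) : Op twoS L :=
  NormedSpace.exp ((-(ε : ℂ) * ((2 * Real.pi / L : ℝ) : ℂ) * Complex.I) • twistGen twoS L)

/-- The generator `Σ_{j=1}^{L} (j - 1/2)(S^z_j - S)` of the link-centered twist. -/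
def twistGenL (twoS L : ℕ) [NeZero L] : Op twoS L :=
  ∑ j ∈ Finset.Icc 1 L,
    ((j : ℂ) - 1 / 2) • site twoS L ((j : ℕ) : Fin L) (SzMat twoS - ((spin twoS : ℝ) : ℂ) • 1)

/-- The link-centered twist operator `U^twl_{ε·2π}`, `ε = ±1`. -/
def UtwL (twoS L : ℕ) [NeZero L] (ε : ℝ) : Op twoS L :=
  NormedSpace.exp ((-(ε : ℂ) * ((2 * Real.pi / L : ℝ) : ℂ) * Complex.I) • twistGenL twoS L)

/-- The spin-reversal operator `U^y_π = exp(-iπ S^y_T)`. -/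
def Uy (twoS L : ℕ) : Op twoS L :=
  NormedSpace.exp ((-Complex.I * ((Real.pi : ℝ) : ℂ)) • SyT twoS L)

/-- The sector `V(M, q)` of simultaneous eigenvectors of `S^z_T` (eigenvalue `M`) and of
the translation `U_trl` (eigenvalue `e^{iq}`). -/
def Vsp (twoS L : ℕ) [NeZero L] (M q : ℝ) : Submodule ℂ (Conf twoS L → ℂ) :=
  Module.End.eigenspace (Matrix.mulVecLin (SzT twoS L)) ((M : ℝ) : ℂ) ⊓
    Module.End.eigenspace (Matrix.mulVecLin (Utrl twoS L)) (Complex.exp (Complex.I * q))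

/-- `E(M; q)`: the smallest eigenvalue of `H` restricted to the sector `V(M,q)`. -/
def En (twoS L : ℕ) [NeZero L] (J Δ : ℕ → ℝ) (h : ℝ) (M q : ℝ) : ℝ :=
  sInf {E : ℝ | ∃ ψ ∈ Vsp twoS L M q, ψ ≠ 0 ∧
    (Ham twoS L J Δ h).mulVec ψ = ((E : ℝ) : ℂ) • ψ}

/-- The expectation value `⟨ψ, A ψ⟩`. -/
def expVal (twoS L : ℕ) (A : Op twoS L) (ψ : Conf twoS L → ℂ) : ℂ :=
  dotProduct (star ψ) (A.mulVec ψ)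

/-- `q` belongs to the lattice `(2π/L)ℤ` of allowed wavenumbers. -/
def allowedQ (L : ℕ) (q : ℝ) : Prop := ∃ k : ℤ, q = 2 * Real.pi * k / L

/-!
The gauge `G = diag (∏ᵢ (-1)^{i kᵢ})` (a real diagonal unitary, `kᵢ = S - mᵢ`) anticommutes, on a
ring of even length, with every nearest-neighbour hopping term `S⁺ⱼS⁻ⱼ₊₁ + S⁻ⱼS⁺ⱼ₊₁`, and commutes
with the Ising part of `H`. In the sector `M = (S - m)L` the weight `∑ kᵢ = mL` is even, so `G`
preserves `V(M, q)`. Writing `H = T/2 + H_zz` with `T = ∑ⱼ hopⱼ`, the variational principle for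
`Gψ` gives `E ≤ ⟨Gψ, H Gψ⟩ = E - ⟨ψ, T ψ⟩`, hence `Re ⟨ψ, T ψ⟩ ≤ 0`. Translation invariance makes
all bonds contribute equally, and `⟨S^x_j S^x_{j+1}⟩ = ¼ ⟨hopⱼ⟩` since `S⁺S⁺` and `S⁻S⁻` change
`S^z_T` and so have vanishing expectation in an `S^z_T`-eigenstate.
-/

end LSM

section Variational

open Module.End

theorem LinearMap.IsSymmetric.exists_eigenvalue_le_re_inner {𝕜 E : Type*} [RCLike 𝕜]
    [NormedAddCommGroup E] [InnerProductSpace 𝕜 E] [FiniteDimensional 𝕜 E]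
    {T : E →ₗ[𝕜] E} (hT : T.IsSymmetric) {x : E} (hx : ‖x‖ = 1) :
    ∃ μ : ℝ, HasEigenvalue T μ ∧ μ ≤ RCLike.re (inner 𝕜 x (T x)) := by
  have : Nontrivial E := ⟨⟨x, 0, by rintro rfl; simp at hx⟩⟩
  have hx0 : x ≠ 0 := by rintro rfl; simp at hx
  refine ⟨_, hT.hasEigenvalue_iInf_of_finiteDimensional, ?_⟩
  have hbdd : BddBelow (Set.range fun y : {y : E // y ≠ 0} =>
      RCLike.re (inner 𝕜 (T y) y) / ‖(y : E)‖ ^ 2) := by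
    refine ⟨-‖LinearMap.toContinuousLinearMap T‖, ?_⟩
    rintro _ ⟨y, rfl⟩
    exact (abs_le.mp ((LinearMap.toContinuousLinearMap T).rayleighQuotient_le_norm y)).1
  simpa [hx, hT x x] using ciInf_le hbdd ⟨x, hx0⟩

theorem LinearMap.IsSymmetric.exists_eigenvector_mem_le_re_inner {𝕜 E : Type*} [RCLike 𝕜]
    [NormedAddCommGroup E] [InnerProductSpace 𝕜 E] [FiniteDimensional 𝕜 E]
    {T : E →ₗ[𝕜] E} (hT : T.IsSymmetric) {W : Submodule 𝕜 E} (hW : ∀ v ∈ W, T v ∈ W)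
    {x : E} (hxW : x ∈ W) (hx : ‖x‖ = 1) :
    ∃ μ : ℝ, ∃ v ∈ W, v ≠ 0 ∧ T v = (μ : 𝕜) • v ∧ μ ≤ RCLike.re (inner 𝕜 x (T x)) := by
  have hTW : (T.restrict hW).IsSymmetric := fun u v => hT u v
  obtain ⟨μ, hμ, hle⟩ := hTW.exists_eigenvalue_le_re_inner (x := ⟨x, hxW⟩) hx
  obtain ⟨v, hv⟩ := hμ.exists_hasEigenvector
  refine ⟨μ, v, v.2, by simpa using hv.2, ?_, hle⟩
  simpa using congrArg Subtype.val (mem_eigenspace_iff.mp hv.1)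

theorem Matrix.IsHermitian.sInf_le_re_dotProduct_mulVec {𝕜 ι : Type*} [RCLike 𝕜] [Fintype ι]
    [DecidableEq ι] {H : Matrix ι ι 𝕜} (hH : H.IsHermitian) {W : Submodule 𝕜 (ι → 𝕜)}
    (hW : ∀ v ∈ W, H *ᵥ v ∈ W) {φ : ι → 𝕜} (hφW : φ ∈ W) (hφ : star φ ⬝ᵥ φ = 1) :
    sInf {E : ℝ | ∃ ψ ∈ W, ψ ≠ 0 ∧ H *ᵥ ψ = (E : 𝕜) • ψ} ≤ RCLike.re (star φ ⬝ᵥ H *ᵥ φ) := by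
  have hbdd : BddBelow {E : ℝ | ∃ ψ ∈ W, ψ ≠ 0 ∧ H *ᵥ ψ = (E : 𝕜) • ψ} := by
    refine (H.finite_real_spectrum.subset ?_).bddBelow
    rintro E ⟨ψ, -, hψ0, hψ⟩
    rw [← spectrum.preimage_algebraMap 𝕜, Set.mem_preimage, ← Matrix.spectrum_toLin',
      ← hasEigenvalue_iff_mem_spectrum]
    exact hasEigenvalue_of_hasEigenvector ⟨mem_eigenspace_iff.mpr (by simpa using hψ), hψ0⟩
  have hnorm : ‖WithLp.toLp 2 φ‖ = 1 := by
    have h := inner_self_eq_norm_sq_to_K (𝕜 := 𝕜) (WithLp.toLp 2 φ)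
    rw [EuclideanSpace.inner_toLp_toLp, dotProduct_comm, hφ] at h
    have h' : ‖WithLp.toLp 2 φ‖ ^ 2 = 1 := by exact_mod_cast h.symm
    exact (pow_eq_one_iff_of_nonneg (norm_nonneg _) two_ne_zero).mp h'
  obtain ⟨μ, v, hvW, hv0, hv, hle⟩ :=
    (Matrix.isSymmetric_toEuclideanLin_iff.mpr hH).exists_eigenvector_mem_le_re_inner
      (W := W.comap (WithLp.linearEquiv 2 𝕜 (ι → 𝕜)).toLinearMap)
      (fun v hv => hW _ hv) (x := WithLp.toLp 2 φ) hφW hnorm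
  have hμ : μ ∈ {E : ℝ | ∃ ψ ∈ W, ψ ≠ 0 ∧ H *ᵥ ψ = (E : 𝕜) • ψ} :=
    ⟨v.ofLp, hvW, by simpa using hv0, by simpa using congrArg WithLp.ofLp hv⟩
  refine (csInf_le hbdd hμ).trans ?_
  simpa [EuclideanSpace.inner_toLp_toLp, dotProduct_comm] using hle

end Variational

lemma Matrix.mulVec_mulVec_eq_smul_of_commute {n R : Type*} [Fintype n] [CommRing R]
    {A B : Matrix n n R} (hAB : Commute A B) {v : n → R} {c : R} (hv : A *ᵥ v = c • v) :
    A *ᵥ (B *ᵥ v) = c • (B *ᵥ v) := by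
  rw [Matrix.mulVec_mulVec, hAB.eq, ← Matrix.mulVec_mulVec, hv, Matrix.mulVec_smul]

lemma Fin.apply_eq_apply_zero_of_forall_sub_one {L : ℕ} [NeZero L] {α : Type*} {f : Fin L → α}
    (hf : ∀ j, f (j - 1) = f j) (j : Fin L) : f j = f 0 := by
  have key : ∀ n : ℕ, f n = f 0 := fun n => by
    induction n with
    | zero => simp
    | succ n ih => rw [← ih, ← hf, Nat.cast_succ, add_sub_cancel_right]
  simpa using key j

section Parity

variable {L : ℕ}

lemma neg_one_pow_val_add (hL : Even L) (a b : Fin L) :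
    (-1 : ℂ) ^ ((a + b : Fin L) : ℕ) = (-1) ^ (a : ℕ) * (-1) ^ (b : ℕ) := by
  rw [Fin.val_add, ← pow_add, neg_one_pow_eq_pow_mod_two,
    Nat.mod_mod_of_dvd _ (even_iff_two_dvd.mp hL), ← neg_one_pow_eq_pow_mod_two]

lemma neg_one_pow_val_one [NeZero L] (hL : Even L) : (-1 : ℂ) ^ ((1 : Fin L) : ℕ) = -1 := by
  rw [Fin.val_one', neg_one_pow_eq_pow_mod_two, Nat.mod_mod_of_dvd _ (even_iff_two_dvd.mp hL)]
  norm_num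

end Parity

namespace LSM

section Site

variable {twoS L : ℕ}

lemma site_apply (j : Fin L) (A : Matrix (Fin (N twoS)) (Fin (N twoS)) ℂ) (x y : Conf twoS L) :
    site twoS L j A x y = if ∀ i, i ≠ j → x i = y i then A (x j) (y j) else 0 := rfl

lemma eq_off_of_site_apply_ne_zero {j : Fin L} {A : Matrix (Fin (N twoS)) (Fin (N twoS)) ℂ}
    {x y : Conf twoS L} (h : site twoS L j A x y ≠ 0) :
    (∀ i, i ≠ j → x i = y i) ∧ A (x j) (y j) ≠ 0 := by
  rw [site_apply] at h
  by_cases hxy : ∀ i, i ≠ j → x i = y i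
  · exact ⟨hxy, by rwa [if_pos hxy] at h⟩
  · exact absurd (if_neg hxy) h

lemma site_add (j : Fin L) (A B : Matrix (Fin (N twoS)) (Fin (N twoS)) ℂ) :
    site twoS L j (A + B) = site twoS L j A + site twoS L j B := by
  ext x y
  simp only [site_apply, Matrix.add_apply]
  split_ifs <;> simp

lemma site_smul (j : Fin L) (c : ℂ) (A : Matrix (Fin (N twoS)) (Fin (N twoS)) ℂ) :
    site twoS L j (c • A) = c • site twoS L j A := by
  ext x y
  simp only [site_apply, Matrix.smul_apply]
  split_ifs <;> simp

lemma site_conjTranspose (j : Fin L) (A : Matrix (Fin (N twoS)) (Fin (N twoS)) ℂ) :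
    (site twoS L j A)ᴴ = site twoS L j Aᴴ := by
  ext x y
  simp only [Matrix.conjTranspose_apply, site_apply, eq_comm (a := x _)]
  split_ifs <;> simp

lemma site_diagonal (j : Fin L) (d : Fin (N twoS) → ℂ) :
    site twoS L j (Matrix.diagonal d) = Matrix.diagonal fun x : Conf twoS L => d (x j) := by
  ext x y
  simp only [site_apply, Matrix.diagonal_apply]
  by_cases hxy : x = y
  · simp [hxy]
  · have : ¬ ((∀ i, i ≠ j → x i = y i) ∧ x j = y j) := fun h =>
      hxy (funext fun i => if hij : i = j then hij ▸ h.2 else h.1 i hij)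
    split_ifs <;> simp_all

lemma site_mul_site {j k : Fin L} (hjk : j ≠ k) (A B : Matrix (Fin (N twoS)) (Fin (N twoS)) ℂ)
    (x y : Conf twoS L) :
    (site twoS L j A * site twoS L k B) x y =
      if ∀ i, i ≠ j → i ≠ k → x i = y i then A (x j) (y j) * B (x k) (y k) else 0 := by
  have hz : (∀ i, i ≠ k → Function.update x j (y j) i = y i) ↔
      ∀ i, i ≠ j → i ≠ k → x i = y i := by
    refine ⟨fun h i hij hik => by simpa [hij] using h i hik, fun h i hik => ?_⟩
    by_cases hij : i = j
    · simp [hij]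
    · simpa [hij] using h i hij hik
  rw [Matrix.mul_apply, Finset.sum_eq_single (Function.update x j (y j))]
  · have hx : ∀ i, i ≠ j → x i = Function.update x j (y j) i := fun i hij => by simp [hij]
    simp only [site_apply, if_pos hx, hz, Function.update_self,
      Function.update_of_ne hjk.symm]
    split_ifs <;> simp
  · intro z _ hzu
    rw [site_apply, site_apply]
    split_ifs with hxz hzy
    · refine absurd (funext fun i => ?_) hzu
      by_cases hij : i = j
      · subst hij; simpa using hzy i hjk
      · simpa [hij] using (hxz i hij).symm
    all_goals simp
  · simp

lemma site_mul_site_comm {j k : Fin L} (hjk : j ≠ k)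
    (A B : Matrix (Fin (N twoS)) (Fin (N twoS)) ℂ) :
    site twoS L j A * site twoS L k B = site twoS L k B * site twoS L j A := by
  ext x y
  rw [site_mul_site hjk, site_mul_site hjk.symm, mul_comm]
  congr 1
  exact propext ⟨fun h i hk hj => h i hj hk, fun h i hj hk => h i hk hj⟩

lemma conjTranspose_site_mul_site {j k : Fin L} (hjk : j ≠ k)
    (A B : Matrix (Fin (N twoS)) (Fin (N twoS)) ℂ) :
    (site twoS L j A * site twoS L k B)ᴴ = site twoS L j Aᴴ * site twoS L k Bᴴ := by
  rw [Matrix.conjTranspose_mul, site_conjTranspose, site_conjTranspose, site_mul_site_comm hjk.symm]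

lemma site_SxMat_mul_site_SxMat (j k : Fin L) :
    site twoS L j (SxMat twoS) * site twoS L k (SxMat twoS) = (4⁻¹ : ℂ) •
      ((site twoS L j (SpMat twoS) * site twoS L k (SpMat twoS) +
        site twoS L j (SmMat twoS) * site twoS L k (SmMat twoS)) +
      (site twoS L j (SpMat twoS) * site twoS L k (SmMat twoS) +
        site twoS L j (SmMat twoS) * site twoS L k (SpMat twoS))) := by
  simp only [SxMat, site_smul, site_add, Matrix.smul_mul, Matrix.mul_smul, Matrix.mul_add,
    Matrix.add_mul]
  module

end Site

section Spin

variable {twoS : ℕ}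

lemma SpMat_conjTranspose : (SpMat twoS)ᴴ = SmMat twoS := by
  ext a b
  simp only [Matrix.conjTranspose_apply, SpMat, SmMat, Matrix.of_apply]
  by_cases h : (a : ℕ) = (b : ℕ) + 1
  · have hm : mval twoS a = mval twoS b - 1 := by simp only [mval, h]; push_cast; ring
    rw [if_pos h.symm, if_pos h, hm, Complex.star_def, Complex.conj_ofReal]
    ring_nf
  · rw [if_neg (Ne.symm h), if_neg h, star_zero]

lemma SmMat_conjTranspose : (SmMat twoS)ᴴ = SpMat twoS := by
  rw [← SpMat_conjTranspose, Matrix.conjTranspose_conjTranspose]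

lemma SzMat_conjTranspose : (SzMat twoS)ᴴ = SzMat twoS := by
  simp [SzMat, Matrix.diagonal_conjTranspose]

/-- `A` raises `S^z` by `d`: in the basis `|k⟩ = |m = S - k⟩` it maps `|k⟩` into `|k - d⟩`. -/
def RaisesSz (A : Matrix (Fin (N twoS)) (Fin (N twoS)) ℂ) (d : ℤ) : Prop :=
  ∀ a b, A a b ≠ 0 → (b : ℤ) = a + d

lemma raisesSz_SpMat : RaisesSz (SpMat twoS) 1 := fun a b h => by
  by_contra hab
  exact h (if_neg (by omega))

lemma raisesSz_SmMat : RaisesSz (SmMat twoS) (-1) := fun a b h => by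
  by_contra hab
  exact h (if_neg (by omega))

lemma raisesSz_diagonal (d : Fin (N twoS) → ℂ) : RaisesSz (Matrix.diagonal d) 0 := fun a b h => by
  by_contra hab
  exact h (Matrix.diagonal_apply_ne _ fun hab' => hab (by simp [hab']))

lemma raisesSz_SzMat : RaisesSz (SzMat twoS) 0 := raisesSz_diagonal _

end Spin

section Magnetization

variable {twoS L : ℕ}

def weight (x : Conf twoS L) : ℕ := ∑ i, (x i : ℕ)

def RaisesSzT (B : Op twoS L) (d : ℤ) : Prop :=
  ∀ x y, B x y ≠ 0 → (weight y : ℤ) = weight x + d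

lemma RaisesSzT.add {A B : Op twoS L} {d : ℤ} (hA : RaisesSzT A d) (hB : RaisesSzT B d) :
    RaisesSzT (A + B) d := fun x y h => by
  by_cases hAxy : A x y = 0
  · exact hB x y (by simpa [hAxy] using h)
  · exact hA x y hAxy

lemma RaisesSzT.smul {B : Op twoS L} {d : ℤ} (hB : RaisesSzT B d) (c : ℂ) :
    RaisesSzT (c • B) d := fun x y h => hB x y (right_ne_zero_of_mul h)

lemma RaisesSzT.sum {ι : Type*} {s : Finset ι} {B : ι → Op twoS L} {d : ℤ}
    (hB : ∀ i ∈ s, RaisesSzT (B i) d) : RaisesSzT (∑ i ∈ s, B i) d := fun x y h => by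
  rw [Matrix.sum_apply] at h
  obtain ⟨i, hi, hBi⟩ := Finset.exists_ne_zero_of_sum_ne_zero h
  exact hB i hi x y hBi

lemma RaisesSzT.mul {A B : Op twoS L} {d e : ℤ} (hA : RaisesSzT A d) (hB : RaisesSzT B e) :
    RaisesSzT (A * B) (d + e) := fun x y h => by
  obtain ⟨z, -, hz⟩ := Finset.exists_ne_zero_of_sum_ne_zero h
  rw [hB z y (right_ne_zero_of_mul hz), hA x z (left_ne_zero_of_mul hz), add_assoc]

lemma raisesSzT_site {A : Matrix (Fin (N twoS)) (Fin (N twoS)) ℂ} {d : ℤ} (hA : RaisesSz A d)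
    (j : Fin L) : RaisesSzT (site twoS L j A) d := fun x y h => by
  obtain ⟨hoff, hA'⟩ := eq_off_of_site_apply_ne_zero h
  have hsum : ∑ i, ((y i : ℕ) - (x i : ℕ) : ℤ) = (y j : ℕ) - (x j : ℕ) :=
    Fintype.sum_eq_single j fun i hij => by rw [hoff i hij, sub_self]
  rw [Finset.sum_sub_distrib, hA _ _ hA'] at hsum
  simp only [weight]
  push_cast
  linarith

lemma SzT_eq_diagonal :
    SzT twoS L = Matrix.diagonal fun x => (((L : ℝ) * spin twoS - weight x : ℝ) : ℂ) := by
  ext x y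
  by_cases hxy : x = y
  · simp [SzT, SzMat, site_diagonal, Matrix.sum_apply, hxy, mval, weight]
  · simp [SzT, SzMat, site_diagonal, Matrix.sum_apply, hxy]

lemma commute_SzT {B : Op twoS L} (hB : RaisesSzT B 0) : Commute (SzT twoS L) B := by
  ext x y
  rw [SzT_eq_diagonal, Matrix.diagonal_mul, Matrix.mul_diagonal]
  by_cases hxy : B x y = 0
  · simp [hxy]
  · have hw : weight x = weight y := by have := hB x y hxy; omega
    rw [hw, mul_comm]

end Magnetization

section ExpVal

variable {twoS L : ℕ}

lemma expVal_add (A B : Op twoS L) (ψ : Conf twoS L → ℂ) :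
    expVal twoS L (A + B) ψ = expVal twoS L A ψ + expVal twoS L B ψ := by
  simp only [expVal, Matrix.add_mulVec, dotProduct_add]

lemma expVal_sub (A B : Op twoS L) (ψ : Conf twoS L → ℂ) :
    expVal twoS L (A - B) ψ = expVal twoS L A ψ - expVal twoS L B ψ := by
  simp only [expVal, Matrix.sub_mulVec, dotProduct_sub]

lemma expVal_smul (c : ℂ) (A : Op twoS L) (ψ : Conf twoS L → ℂ) :
    expVal twoS L (c • A) ψ = c * expVal twoS L A ψ := by
  simp only [expVal, Matrix.smul_mulVec, dotProduct_smul, smul_eq_mul]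

lemma expVal_sum {ι : Type*} (s : Finset ι) (A : ι → Op twoS L) (ψ : Conf twoS L → ℂ) :
    expVal twoS L (∑ i ∈ s, A i) ψ = ∑ i ∈ s, expVal twoS L (A i) ψ := by
  simp only [expVal, Matrix.sum_mulVec, dotProduct_sum]

lemma expVal_smul_vec (A : Op twoS L) (c : ℂ) (ψ : Conf twoS L → ℂ) :
    expVal twoS L A (c • ψ) = star c * c * expVal twoS L A ψ := by
  simp only [expVal, Matrix.mulVec_smul, star_smul, smul_dotProduct, dotProduct_smul, smul_eq_mul]
  ring

lemma expVal_mulVec (A G : Op twoS L) (ψ : Conf twoS L → ℂ) :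
    expVal twoS L A (G *ᵥ ψ) = expVal twoS L (Gᴴ * A * G) ψ := by
  simp only [expVal, Matrix.star_mulVec, ← Matrix.dotProduct_mulVec, Matrix.mulVec_mulVec,
    Matrix.mul_assoc]

lemma expVal_submatrix (A : Op twoS L) (e : Conf twoS L ≃ Conf twoS L) (ψ : Conf twoS L → ℂ) :
    expVal twoS L (A.submatrix e e) (ψ ∘ e) = expVal twoS L A ψ := by
  simp only [expVal, Matrix.submatrix_mulVec_equiv, Function.comp_assoc, Equiv.self_comp_symm,
    Function.comp_id, dotProduct]
  exact e.sum_comp fun x => star (ψ x) * (A *ᵥ ψ) x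

lemma expVal_eq_zero_of_raisesSzT {A : Op twoS L} {d : ℤ} (hA : RaisesSzT A d) (hd : d ≠ 0)
    {ψ : Conf twoS L → ℂ} {n : ℕ} (hψ : ∀ x, ψ x ≠ 0 → weight x = n) :
    expVal twoS L A ψ = 0 := by
  refine Finset.sum_eq_zero fun x _ => ?_
  by_cases hx : ψ x = 0
  · simp [hx]
  refine mul_eq_zero_of_right _ (Finset.sum_eq_zero fun y _ => ?_)
  by_cases hy : ψ y = 0
  · simp [hy]
  by_cases hxy : A x y = 0
  · simp [hxy]
  have := hA x y hxy
  rw [hψ x hx, hψ y hy] at this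
  omega

end ExpVal

section Gauge

variable {twoS L : ℕ}

def gaugeSign (x : Conf twoS L) : ℂ := ∏ i : Fin L, (-1 : ℂ) ^ ((i : ℕ) * (x i : ℕ))

def gauge (twoS L : ℕ) : Op twoS L := Matrix.diagonal gaugeSign

lemma gaugeSign_mul_self (x : Conf twoS L) : gaugeSign x * gaugeSign x = 1 := by
  rw [gaugeSign, ← Finset.prod_mul_distrib]
  exact Finset.prod_eq_one fun i _ => by rw [← mul_pow]; norm_num

lemma gauge_mul_gauge : gauge twoS L * gauge twoS L = 1 := by
  rw [gauge, Matrix.diagonal_mul_diagonal, ← Matrix.diagonal_one]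
  exact congrArg _ (funext gaugeSign_mul_self)

lemma gauge_conjTranspose : (gauge twoS L)ᴴ = gauge twoS L := by
  simp [gauge, gaugeSign, Matrix.diagonal_conjTranspose]

lemma gaugeSign_mul_of_eq_off {j : Fin L} {x y : Conf twoS L} (h : ∀ i, i ≠ j → x i = y i) :
    gaugeSign x * gaugeSign y = (-1 : ℂ) ^ ((j : ℕ) * ((x j : ℕ) + (y j : ℕ))) := by
  rw [gaugeSign, gaugeSign, ← Finset.prod_mul_distrib, Fintype.prod_eq_single j]
  · rw [← pow_add, mul_add]
  · intro i hi
    rw [h i hi, ← mul_pow]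
    norm_num

lemma gauge_mul_site_mul_gauge {A : Matrix (Fin (N twoS)) (Fin (N twoS)) ℂ} {d : ℤ}
    (hA : RaisesSz A d) (hd : Odd d) (j : Fin L) :
    gauge twoS L * site twoS L j A * gauge twoS L = (-1 : ℂ) ^ (j : ℕ) • site twoS L j A := by
  ext x y
  rw [gauge, Matrix.mul_diagonal, Matrix.diagonal_mul, Matrix.smul_apply, smul_eq_mul]
  by_cases hxy : site twoS L j A x y = 0
  · simp [hxy]
  obtain ⟨hoff, hA'⟩ := eq_off_of_site_apply_ne_zero hxy
  have hodd : Odd ((x j : ℕ) + (y j : ℕ)) := by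
    rw [← Int.odd_coe_nat]
    push_cast
    rw [hA _ _ hA', ← add_assoc, ← two_mul]
    exact (even_two_mul _).add_odd hd
  rw [mul_right_comm, gaugeSign_mul_of_eq_off hoff, pow_mul', hodd.neg_one_pow, mul_comm]

end Gauge

section Translation

variable {twoS L : ℕ} [NeZero L]

def shift : Conf twoS L ≃ Conf twoS L where
  toFun x i := x (i - 1)
  invFun x i := x (i + 1)
  left_inv x := by simp
  right_inv x := by simp

/-- Conjugation `B ↦ Utrl * B * Utrlᴴ` by the translation. -/
def translate : Op twoS L ≃ₐ[ℂ] Op twoS L := Matrix.reindexAlgEquiv ℂ ℂ shift.symm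

lemma translate_apply (B : Op twoS L) : translate B = B.submatrix shift shift := rfl

lemma Utrl_eq_toMatrix : Utrl twoS L = (shift.toPEquiv).toMatrix := by
  ext x y
  simp only [PEquiv.toMatrix_apply, Equiv.toPEquiv_apply, Option.mem_some_iff, Utrl,
    Matrix.of_apply, ← Equiv.eq_symm_apply]
  rfl

lemma Utrl_mulVec (ψ : Conf twoS L → ℂ) : Utrl twoS L *ᵥ ψ = ψ ∘ shift := by
  rw [Utrl_eq_toMatrix, PEquiv.toMatrix_toPEquiv_mulVec]

lemma commute_Utrl {B : Op twoS L} (hB : translate B = B) : Commute (Utrl twoS L) B := by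
  rw [Commute, SemiconjBy, Utrl_eq_toMatrix, PEquiv.toMatrix_toPEquiv_mul,
    PEquiv.mul_toMatrix_toPEquiv]
  ext x y
  rw [translate_apply] at hB
  simpa using congr_fun (congr_fun hB x) (shift.symm y)

lemma translate_site (j : Fin L) (A : Matrix (Fin (N twoS)) (Fin (N twoS)) ℂ) :
    translate (site twoS L j A) = site twoS L (j - 1) A := by
  ext x y
  have hoff : (∀ i, i ≠ j → x (i - 1) = y (i - 1)) ↔ ∀ i, i ≠ j - 1 → x i = y i :=
    ⟨fun h i hi => by simpa using h (i + 1) fun hij => hi (by simp [← hij]),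
      fun h i hi => h (i - 1) (by simpa using hi)⟩
  simp only [translate_apply, Matrix.submatrix_apply, site_apply, shift, Equiv.coe_fn_mk, hoff]

lemma translate_Ham (J Δ : ℕ → ℝ) (h : ℝ) : translate (Ham twoS L J Δ h) = Ham twoS L J Δ h := by
  simp only [Ham, SzT, map_add, map_sum, map_smul, map_mul, translate_site]
  refine congrArg₂ (· + ·) (Fintype.sum_equiv (Equiv.subRight 1) _ _ fun j => ?_)
    (congrArg _ (Fintype.sum_equiv (Equiv.subRight 1) _ _ fun j => rfl))
  simp only [Equiv.subRight_apply, add_sub_right_comm]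

lemma gaugeSign_shift (hL : Even L) (x : Conf twoS L) :
    gaugeSign (shift x) = (-1 : ℂ) ^ weight x * gaugeSign x := by
  simp only [gaugeSign, weight, shift, Equiv.coe_fn_mk, ← Finset.prod_pow_eq_pow_sum,
    ← Finset.prod_mul_distrib]
  refine Fintype.prod_equiv (Equiv.subRight 1) _ _ fun i => ?_
  obtain ⟨k, rfl⟩ : ∃ k, i = k + 1 := ⟨i - 1, by simp⟩
  rw [Equiv.subRight_apply, add_sub_cancel_right, pow_mul, neg_one_pow_val_add hL,
    neg_one_pow_val_one hL, mul_neg_one, neg_pow, ← pow_mul, mul_comm]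

end Translation

section Sector

variable {twoS L : ℕ} [NeZero L]

lemma mem_Vsp_iff {M q : ℝ} {ψ : Conf twoS L → ℂ} :
    ψ ∈ Vsp twoS L M q ↔ SzT twoS L *ᵥ ψ = (M : ℂ) • ψ ∧
      Utrl twoS L *ᵥ ψ = Complex.exp (Complex.I * q) • ψ := by
  simp only [Vsp, Submodule.mem_inf, Module.End.mem_eigenspace_iff, Matrix.mulVecLin_apply]

lemma raisesSzT_Ham (J Δ : ℕ → ℝ) (h : ℝ) : RaisesSzT (Ham twoS L J Δ h) 0 := by
  have hSzT : RaisesSzT (SzT twoS L) 0 := RaisesSzT.sum fun j _ => raisesSzT_site raisesSz_SzMat j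
  refine (RaisesSzT.sum fun j _ => RaisesSzT.sum fun r _ => ?_).add (hSzT.smul _)
  refine ((RaisesSzT.add ?_ ?_).smul _).add (RaisesSzT.smul ?_ _)
  · exact (raisesSzT_site raisesSz_SpMat j).mul (raisesSzT_site raisesSz_SmMat _)
  · exact (raisesSzT_site raisesSz_SmMat j).mul (raisesSzT_site raisesSz_SpMat _)
  · exact (raisesSzT_site raisesSz_SzMat j).mul (raisesSzT_site raisesSz_SzMat _)

lemma Ham_isHermitian (J Δ : ℕ → ℝ) (h : ℝ) : (Ham twoS L J Δ h).IsHermitian := by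
  have hne : ∀ (j : Fin L), ∀ r ∈ Finset.Icc 1 (L / 2), j ≠ j + (r : Fin L) := by
    intro j r hr hjr
    obtain ⟨h1, h2⟩ := Finset.mem_Icc.mp hr
    have hdvd : L ∣ r := Fin.natCast_eq_zero.mp (left_eq_add.mp hjr)
    have := Nat.le_of_dvd (by omega) hdvd
    omega
  simp only [Matrix.IsHermitian, Ham, SzT, Matrix.conjTranspose_add, Matrix.conjTranspose_sum,
    Matrix.conjTranspose_smul, site_conjTranspose, SzMat_conjTranspose, star_div₀,
    Complex.star_def, Complex.conj_ofReal, map_ofNat]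
  refine congrArg₂ (· + ·) (Finset.sum_congr rfl fun j _ => Finset.sum_congr rfl fun r hr => ?_) rfl
  rw [conjTranspose_site_mul_site (hne j r hr), conjTranspose_site_mul_site (hne j r hr),
    conjTranspose_site_mul_site (hne j r hr), SpMat_conjTranspose, SmMat_conjTranspose,
    SzMat_conjTranspose, add_comm (site twoS L j (SmMat twoS) * _)]

lemma Ham_mulVec_mem_Vsp (J Δ : ℕ → ℝ) (h : ℝ) (M q : ℝ) :
    ∀ v ∈ Vsp twoS L M q, Ham twoS L J Δ h *ᵥ v ∈ Vsp twoS L M q := by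
  intro v hv
  rw [mem_Vsp_iff] at hv ⊢
  exact ⟨Matrix.mulVec_mulVec_eq_smul_of_commute (commute_SzT (raisesSzT_Ham J Δ h)) hv.1,
    Matrix.mulVec_mulVec_eq_smul_of_commute (commute_Utrl (translate_Ham J Δ h)) hv.2⟩

lemma expVal_translate_of_mem_Vsp {M q : ℝ} {ψ : Conf twoS L → ℂ} (hψ : ψ ∈ Vsp twoS L M q)
    (A : Op twoS L) : expVal twoS L (translate A) ψ = expVal twoS L A ψ := by
  have hU := (mem_Vsp_iff.mp hψ).2
  rw [Utrl_mulVec] at hU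
  have hc : star (Complex.exp (Complex.I * q)) * Complex.exp (Complex.I * q) = 1 := by
    rw [Complex.star_def, Complex.conj_mul', Complex.norm_exp_I_mul_ofReal]
    norm_num
  calc expVal twoS L (translate A) ψ
      = star (Complex.exp (Complex.I * q)) * Complex.exp (Complex.I * q) *
          expVal twoS L (translate A) ψ := by rw [hc, one_mul]
    _ = expVal twoS L A ψ := by rw [← expVal_smul_vec, ← hU, translate_apply, expVal_submatrix]

lemma weight_eq_of_mem_Vsp {m : ℕ} {q : ℝ} {ψ : Conf twoS L → ℂ}
    (hψ : ψ ∈ Vsp twoS L ((spin twoS - m) * L) q) {x : Conf twoS L} (hx : ψ x ≠ 0) :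
    weight x = m * L := by
  have h := congr_fun (mem_Vsp_iff.mp hψ).1 x
  rw [SzT_eq_diagonal, Matrix.mulVec_diagonal, Pi.smul_apply, smul_eq_mul] at h
  have h' : (L : ℝ) * spin twoS - weight x = (spin twoS - m) * L := by
    exact_mod_cast mul_right_cancel₀ hx h
  exact_mod_cast (by linarith : (weight x : ℝ) = m * L)

lemma gauge_mulVec_mem_Vsp (hL : Even L) {M q : ℝ} {ψ : Conf twoS L → ℂ}
    (hψ : ψ ∈ Vsp twoS L M q) (heven : ∀ x, ψ x ≠ 0 → Even (weight x)) :
    gauge twoS L *ᵥ ψ ∈ Vsp twoS L M q := by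
  rw [mem_Vsp_iff] at hψ ⊢
  have hcomm : Commute (SzT twoS L) (gauge twoS L) := by
    rw [SzT_eq_diagonal]
    exact Matrix.commute_diagonal _ _
  refine ⟨Matrix.mulVec_mulVec_eq_smul_of_commute hcomm hψ.1, ?_⟩
  rw [Utrl_mulVec] at hψ ⊢
  funext x
  have hx := congr_fun hψ.2 x
  simp only [gauge, Matrix.mulVec_diagonal, Function.comp_apply, Pi.smul_apply,
    smul_eq_mul] at hx ⊢
  rw [hx, gaugeSign_shift hL]
  by_cases h0 : ψ x = 0
  · simp [h0]
  rw [(heven x h0).neg_one_pow]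
  ring

end Sector

section NearestNeighbour

def hop (twoS L : ℕ) [NeZero L] (j : Fin L) : Op twoS L :=
  site twoS L j (SpMat twoS) * site twoS L (j + 1) (SmMat twoS) +
    site twoS L j (SmMat twoS) * site twoS L (j + 1) (SpMat twoS)

def isingPart (twoS L : ℕ) [NeZero L] (Δ : ℕ → ℝ) (h : ℝ) : Op twoS L :=
  (∑ j : Fin L, ∑ r ∈ Finset.Icc 1 (L / 2),
      ((Δ r : ℝ) : ℂ) • (site twoS L j (SzMat twoS) * site twoS L (j + (r : Fin L)) (SzMat twoS))) +
    (h : ℂ) • SzT twoS L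

variable {twoS L : ℕ} [NeZero L]

lemma Ham_eq_hop_add_isingPart (hL : 2 ≤ L) {J : ℕ → ℝ} (hJ1 : J 1 = 1)
    (hJr : ∀ r : ℕ, 2 ≤ r → J r = 0) (Δ : ℕ → ℝ) (h : ℝ) :
    Ham twoS L J Δ h = (2⁻¹ : ℂ) • ∑ j, hop twoS L j + isingPart twoS L Δ h := by
  have hJ : ∀ j : Fin L, ∑ r ∈ Finset.Icc 1 (L / 2), ((J r : ℂ) / 2) •
      (site twoS L j (SpMat twoS) * site twoS L (j + (r : Fin L)) (SmMat twoS) +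
        site twoS L j (SmMat twoS) * site twoS L (j + (r : Fin L)) (SpMat twoS)) =
      (2⁻¹ : ℂ) • hop twoS L j := by
    intro j
    rw [Finset.sum_eq_single_of_mem 1 (Finset.mem_Icc.mpr ⟨le_rfl, by omega⟩)]
    · simp [hJ1, hop, div_eq_inv_mul]
    · intro r hr hr1
      rw [hJr r (by have := (Finset.mem_Icc.mp hr).1; omega)]
      simp
  simp only [Ham, isingPart, Finset.sum_add_distrib, hJ, ← Finset.smul_sum, add_assoc]

lemma gauge_mul_hop_mul_gauge (hL : Even L) (j : Fin L) :
    gauge twoS L * hop twoS L j * gauge twoS L = -hop twoS L j := by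
  have hmul : ∀ A B : Op twoS L, gauge twoS L * (A * B) * gauge twoS L =
      (gauge twoS L * A * gauge twoS L) * (gauge twoS L * B * gauge twoS L) := fun A B => by
    simp only [Matrix.mul_assoc, ← Matrix.mul_assoc (gauge twoS L) (gauge twoS L),
      gauge_mul_gauge, Matrix.one_mul]
  have hsign : (-1 : ℂ) ^ (j : ℕ) * (-1) ^ ((j + 1 : Fin L) : ℕ) = -1 := by
    rw [neg_one_pow_val_add hL, neg_one_pow_val_one hL, ← mul_assoc, ← pow_add, ← two_mul,
      pow_mul]
    norm_num
  have hSp := gauge_mul_site_mul_gauge (L := L) (raisesSz_SpMat (twoS := twoS)) odd_one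
  have hSm := gauge_mul_site_mul_gauge (L := L) (raisesSz_SmMat (twoS := twoS)) (by decide)
  rw [hop, Matrix.mul_add, Matrix.add_mul, hmul, hmul, hSp, hSm, hSp, hSm, smul_mul_smul_comm,
    smul_mul_smul_comm, hsign, neg_one_smul, neg_one_smul, neg_add]

lemma commute_gauge_isingPart (Δ : ℕ → ℝ) (h : ℝ) :
    Commute (gauge twoS L) (isingPart twoS L Δ h) := by
  have hSz : ∀ j, Commute (gauge twoS L) (site twoS L j (SzMat twoS)) := fun j => by
    rw [SzMat, site_diagonal]
    exact Matrix.commute_diagonal _ _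
  exact (Commute.sum_right _ _ _ fun j _ => Commute.sum_right _ _ _ fun r _ =>
    ((hSz j).mul_right (hSz _)).smul_right _).add_right
    ((Commute.sum_right _ _ _ fun j _ => hSz j).smul_right _)

lemma re_expVal_sum_hop_nonpos (hL : Even L) {J : ℕ → ℝ} (hJ1 : J 1 = 1)
    (hJr : ∀ r : ℕ, 2 ≤ r → J r = 0) (Δ : ℕ → ℝ) (h : ℝ) {m : ℕ} {q : ℝ}
    {ψ : Conf twoS L → ℂ} (hψ : ψ ∈ Vsp twoS L ((spin twoS - m) * L) q)
    (hunit : star ψ ⬝ᵥ ψ = 1)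
    (hmin : Ham twoS L J Δ h *ᵥ ψ = (En twoS L J Δ h ((spin twoS - m) * L) q : ℂ) • ψ) :
    (expVal twoS L (∑ j, hop twoS L j) ψ).re ≤ 0 := by
  have hL2 : 2 ≤ L := by obtain ⟨k, hk⟩ := hL; have := NeZero.ne L; omega
  have heven : ∀ x, ψ x ≠ 0 → Even (weight x) := fun x hx => by
    rw [weight_eq_of_mem_Vsp hψ hx]
    exact hL.mul_left m
  have hgauge : gauge twoS L * Ham twoS L J Δ h * gauge twoS L =
      Ham twoS L J Δ h - ∑ j, hop twoS L j := by
    rw [Ham_eq_hop_add_isingPart hL2 hJ1 hJr, Matrix.mul_add, Matrix.add_mul, Matrix.mul_smul,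
      Matrix.smul_mul, Finset.mul_sum, Finset.sum_mul]
    simp only [gauge_mul_hop_mul_gauge hL, (commute_gauge_isingPart Δ h).eq, Matrix.mul_assoc,
      gauge_mul_gauge, Matrix.mul_one, Finset.sum_neg_distrib]
    module
  have hφ : star (gauge twoS L *ᵥ ψ) ⬝ᵥ gauge twoS L *ᵥ ψ = 1 := by
    simpa [expVal, gauge_conjTranspose, gauge_mul_gauge, hunit] using
      expVal_mulVec 1 (gauge twoS L) ψ
  have hE : expVal twoS L (Ham twoS L J Δ h) ψ = En twoS L J Δ h ((spin twoS - m) * L) q := by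
    rw [expVal, hmin, dotProduct_smul, hunit, smul_eq_mul, mul_one]
  have hvar := (Ham_isHermitian J Δ h).sInf_le_re_dotProduct_mulVec
    (Ham_mulVec_mem_Vsp J Δ h _ q) (gauge_mulVec_mem_Vsp hL hψ heven) hφ
  change En twoS L J Δ h _ q ≤ (expVal twoS L _ (gauge twoS L *ᵥ ψ)).re at hvar
  rw [expVal_mulVec, gauge_conjTranspose, hgauge, expVal_sub, hE, Complex.sub_re,
    Complex.ofReal_re] at hvar
  linarith

lemma translate_hop (j : Fin L) : translate (hop twoS L j) = hop twoS L (j - 1) := by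
  simp only [hop, map_add, map_mul, translate_site, add_sub_cancel_right, sub_add_cancel]

lemma expVal_hop_eq_of_mem_Vsp {M q : ℝ} {ψ : Conf twoS L → ℂ} (hψ : ψ ∈ Vsp twoS L M q)
    (j : Fin L) : expVal twoS L (hop twoS L j) ψ = expVal twoS L (hop twoS L 0) ψ :=
  Fin.apply_eq_apply_zero_of_forall_sub_one (f := fun j => expVal twoS L (hop twoS L j) ψ)
    (fun j => by simp only [← translate_hop, expVal_translate_of_mem_Vsp hψ]) j

lemma re_expVal_hop_nonpos (hL : Even L) {J : ℕ → ℝ} (hJ1 : J 1 = 1)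
    (hJr : ∀ r : ℕ, 2 ≤ r → J r = 0) (Δ : ℕ → ℝ) (h : ℝ) {m : ℕ} {q : ℝ}
    {ψ : Conf twoS L → ℂ} (hψ : ψ ∈ Vsp twoS L ((spin twoS - m) * L) q)
    (hunit : star ψ ⬝ᵥ ψ = 1)
    (hmin : Ham twoS L J Δ h *ᵥ ψ = (En twoS L J Δ h ((spin twoS - m) * L) q : ℂ) • ψ)
    (j : Fin L) : (expVal twoS L (hop twoS L j) ψ).re ≤ 0 := by
  have hsum := re_expVal_sum_hop_nonpos hL hJ1 hJr Δ h hψ hunit hmin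
  rw [expVal_sum, Finset.sum_congr rfl fun k _ => expVal_hop_eq_of_mem_Vsp hψ k,
    Finset.sum_const, Finset.card_univ, Fintype.card_fin, nsmul_eq_mul, ← Complex.ofReal_natCast,
    Complex.re_ofReal_mul] at hsum
  rw [expVal_hop_eq_of_mem_Vsp hψ j]
  exact nonpos_of_mul_nonpos_right hsum (by exact_mod_cast Nat.pos_of_ne_zero (NeZero.ne L))

lemma expVal_site_SxMat_mul_site_SxMat_add_one {ψ : Conf twoS L → ℂ} {n : ℕ}
    (hψ : ∀ x, ψ x ≠ 0 → weight x = n) (j : Fin L) :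
    expVal twoS L (site twoS L j (SxMat twoS) * site twoS L (j + 1) (SxMat twoS)) ψ =
      4⁻¹ * expVal twoS L (hop twoS L j) ψ := by
  rw [site_SxMat_mul_site_SxMat, expVal_smul, expVal_add, expVal_add,
    expVal_eq_zero_of_raisesSzT
      ((raisesSzT_site raisesSz_SpMat j).mul (raisesSzT_site raisesSz_SpMat _)) (by norm_num) hψ,
    expVal_eq_zero_of_raisesSzT
      ((raisesSzT_site raisesSz_SmMat j).mul (raisesSzT_site raisesSz_SmMat _)) (by norm_num) hψ, zero_add, zero_add]
  rfl

end NearestNeighbour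

theorem transverse_correlation_nonpositive_general (twoS L : ℕ) [NeZero L]
    (hLeven : Even L)
    (J Δ : ℕ → ℝ) (h : ℝ) (hJ1 : J 1 = 1) (hJr : ∀ r : ℕ, 2 ≤ r → J r = 0)
    (m : ℕ) (q : ℝ)
    (ψ : Conf twoS L → ℂ) (hmem : ψ ∈ Vsp twoS L ((spin twoS - (m : ℝ)) * L) q)
    (hunit : dotProduct (star ψ) ψ = 1)
    (hmin : (Ham twoS L J Δ h).mulVec ψ =
      ((En twoS L J Δ h ((spin twoS - (m : ℝ)) * L) q : ℝ) : ℂ) • ψ) :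
    ∀ j : Fin L,
      (expVal twoS L (site twoS L j (SxMat twoS) * site twoS L (j + 1) (SxMat twoS))
        ψ).re ≤ 0 := by
  intro j
  rw [expVal_site_SxMat_mul_site_SxMat_add_one (fun x hx => weight_eq_of_mem_Vsp hmem hx),
    ← Complex.ofReal_ofNat, ← Complex.ofReal_inv, Complex.re_ofReal_mul]
  exact mul_nonpos_of_nonneg_of_nonpos (by norm_num)
    (re_expVal_hop_nonpos hLeven hJ1 hJr Δ h hmem hunit hmin j)

/-- Corollary to Theorem 6: for the nearest-neighbor chain
(`J(1) = 1`, `J(r) = 0` for `r ≥ 2`), in the sector `M = (S - m)L` the transverse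
nearest-neighbor correlation of a lowest-energy state is nonpositive. -/
theorem transverse_correlation_nonpositive (twoS L : ℕ) [NeZero L]
    (hS : 0 < twoS) (hL4 : 4 ≤ L) (hLeven : Even L)
    (J Δ : ℕ → ℝ) (h : ℝ) (hJ1 : J 1 = 1) (hJr : ∀ r : ℕ, 2 ≤ r → J r = 0)
    (m : ℕ) (hm : m ≤ twoS) (q : ℝ) (hq : allowedQ L q)
    (ψ : Conf twoS L → ℂ) (hmem : ψ ∈ Vsp twoS L ((spin twoS - (m : ℝ)) * L) q)
    (hunit : dotProduct (star ψ) ψ = 1)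
    (hmin : (Ham twoS L J Δ h).mulVec ψ =
      ((En twoS L J Δ h ((spin twoS - (m : ℝ)) * L) q : ℝ) : ℂ) • ψ) :
    ∀ j : Fin L,
      (expVal twoS L (site twoS L j (SxMat twoS) * site twoS L (j + 1) (SxMat twoS))
        ψ).re ≤ 0 :=
  transverse_correlation_nonpositive_general twoS L hLeven J Δ h hJ1 hJr m q ψ hmem hunit hmin

end LSM
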